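/- Let C ≥ 2 and let ℓ : Δ^{C−1} → ℝ^C be a proper loss such that ℓ ∘ Π^{-1} is continuously differentiable on the interior of Δ̃^{C−1}, and let L̲̃(p̃) = L(Π^{-1}(p̃), Π^{-1}(p̃)) be the projected conditional Bayes risk. Then for every p̃ in the interior of Δ̃^{C−1}, writing p_C = 1 − Σ_{i=1}^{C−1} p̃_i, the C × (C−1) Jacobian of ℓ ∘ Π^{-1} is given in block form by: its upper (C−1) × (C−1) block equals (I_{C−1} − 1_{C−1} p̃^T) H_{L̲̃}(p̃) and its last row equals −(p̃^T / p_C)(I_{C−1} − 1_{C−1} p̃^T) H_{L̲̃}(p̃), where H_{L̲̃}(p̃) is the Hessian of L̲̃ at p̃. -/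

import Mathlib

noncomputable section

/-- The probability simplex `Δ^C ⊆ ℝ^{d+1}` (here `C = d+1`). -/
def simplex (n : ℕ) : Set (Fin n → ℝ) :=
  {p | (∀ i, 0 ≤ p i) ∧ ∑ i, p i = 1}

/-- The interior of the projected probability simplex `Δ̃^{C-1} ⊆ ℝ^{C-1}` (here `C-1 = d`). -/
def projInterior (d : ℕ) : Set (Fin d → ℝ) :=
  {p | (∀ i, 0 < p i) ∧ ∑ i, p i < 1}

/-- The inverse projection `Π⁻¹ : Δ̃^{C-1} → Δ^{C-1}`,
`p̃ ↦ (p̃₁, …, p̃_{C-1}, 1 - ∑ i, p̃ i)`. -/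
def piInv (d : ℕ) (p : Fin d → ℝ) : Fin (d + 1) → ℝ :=
  Fin.snoc p (1 - ∑ i, p i)

/-- The conditional risk `L(p,q) = ∑ i, p i * ℓ_i(q)` of a loss `ℓ`. -/
def condRisk {n : ℕ} (ℓ : (Fin n → ℝ) → (Fin n → ℝ)) (p q : Fin n → ℝ) : ℝ :=
  ∑ i, p i * ℓ q i

/-- A loss is proper if `L(p,p) ≤ L(p,q)` on the simplex. -/
def Proper {n : ℕ} (ℓ : (Fin n → ℝ) → (Fin n → ℝ)) : Prop :=
  ∀ p ∈ simplex n, ∀ q ∈ simplex n, condRisk ℓ p p ≤ condRisk ℓ p q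

/-- The composition `ℓ ∘ Π⁻¹ : ℝ^{C-1} → ℝ^C`. -/
def lossComp (d : ℕ) (ℓ : (Fin (d + 1) → ℝ) → (Fin (d + 1) → ℝ)) :
    (Fin d → ℝ) → (Fin (d + 1) → ℝ) :=
  fun x => ℓ (piInv d x)

/-- The projected conditional Bayes risk `L̲̃(p̃) = L(Π⁻¹ p̃, Π⁻¹ p̃)`. -/
def projBayes (d : ℕ) (ℓ : (Fin (d + 1) → ℝ) → (Fin (d + 1) → ℝ)) :
    (Fin d → ℝ) → ℝ :=
  fun x => condRisk ℓ (piInv d x) (piInv d x)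

/-- The gradient `∇L̲̃` of the projected conditional Bayes risk. -/
def gradPB (d : ℕ) (ℓ : (Fin (d + 1) → ℝ) → (Fin (d + 1) → ℝ)) :
    (Fin d → ℝ) → (Fin d → ℝ) :=
  fun x i => fderiv ℝ (projBayes d ℓ) x (Pi.single i 1)

/-- The Hessian `H_{L̲̃}(x) i j = ∂_j ∂_i L̲̃ (x)` of the projected conditional Bayes risk. -/
def hessPB (d : ℕ) (ℓ : (Fin (d + 1) → ℝ) → (Fin (d + 1) → ℝ))
    (x : Fin d → ℝ) (i j : Fin d) : ℝ :=
  fderiv ℝ (gradPB d ℓ) x (Pi.single j 1) i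

/-- The canonical link `ψ̃ = -∇L̲̃`. -/
def canLink (d : ℕ) (ℓ : (Fin (d + 1) → ℝ) → (Fin (d + 1) → ℝ)) :
    (Fin d → ℝ) → (Fin d → ℝ) :=
  fun x i => -(gradPB d ℓ x i)

end

/-!
Properness says that, for fixed `p̃`, the map `q̃ ↦ L(Π⁻¹ p̃, Π⁻¹ q̃)` is minimised at `q̃ = p̃`, so
its derivative vanishes there: `∑ᵢ pᵢ Dℓᵢ(p̃) = 0`. By the product rule this stationarity kills the
`Dℓ` terms in the gradient of `L̲̃`, leaving `∇L̲̃ⱼ = ℓⱼ - ℓ_C` on the (open) interior, hence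
`H_{ij} = Dⱼℓᵢ - Dⱼℓ_C`. Feeding this back into the stationarity identity gives
`Dⱼℓ_C = -∑ₖ p̃ₖ H_{kj}`, which is both block formulas.
-/

noncomputable section

open ContinuousLinearMap

lemma isOpen_projInterior (d : ℕ) : IsOpen (projInterior d) := by
  have hpos : IsOpen {p : Fin d → ℝ | ∀ i, 0 < p i} := by
    simp only [Set.ofPred_forall]
    exact isOpen_iInter_of_finite fun i => isOpen_lt continuous_const (continuous_apply i)
  have hsum : IsOpen {p : Fin d → ℝ | ∑ i, p i < 1} :=
    isOpen_lt (continuous_finsetSum _ fun i _ => continuous_apply i) continuous_const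
  exact hpos.inter hsum

@[simp]
lemma piInv_castSucc {d : ℕ} (p : Fin d → ℝ) (i : Fin d) : piInv d p i.castSucc = p i := by
  simp [piInv]

@[simp]
lemma piInv_last {d : ℕ} (p : Fin d → ℝ) : piInv d p (Fin.last d) = 1 - ∑ i, p i := by
  simp [piInv]

lemma piInv_mem_simplex {d : ℕ} {p : Fin d → ℝ} (hp : p ∈ projInterior d) :
    piInv d p ∈ simplex (d + 1) := by
  obtain ⟨hpos, hsum⟩ := hp
  refine ⟨fun i => ?_, by simp [Fin.sum_univ_castSucc]⟩
  induction i using Fin.lastCases with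
  | last => simp only [piInv_last]; linarith
  | cast k => simpa using (hpos k).le

def piInvDer (d : ℕ) (i : Fin (d + 1)) : (Fin d → ℝ) →L[ℝ] ℝ :=
  Fin.lastCases (-∑ k, proj k) (fun k => proj k) i

@[simp]
lemma piInvDer_castSucc_single {d : ℕ} (k j : Fin d) :
    piInvDer d k.castSucc (Pi.single j 1) = (Pi.single j 1 : Fin d → ℝ) k := by
  simp [piInvDer]

@[simp]
lemma piInvDer_last_single {d : ℕ} (j : Fin d) : piInvDer d (Fin.last d) (Pi.single j 1) = -1 := by
  simp [piInvDer, Finset.sum_pi_single']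

lemma hasFDerivAt_piInv_apply (d : ℕ) (i : Fin (d + 1)) (x : Fin d → ℝ) :
    HasFDerivAt (fun y => piInv d y i) (piInvDer d i) x := by
  induction i using Fin.lastCases with
  | last =>
    simp only [piInv_last, piInvDer, Fin.lastCases_last]
    exact (HasFDerivAt.fun_sum fun k _ => hasFDerivAt_apply k x).const_sub 1
  | cast k =>
    simp only [piInv_castSucc, piInvDer, Fin.lastCases_castSucc]
    exact hasFDerivAt_apply k x

namespace Proper

variable {d : ℕ} {ℓ : (Fin (d + 1) → ℝ) → (Fin (d + 1) → ℝ)}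

lemma isLocalMin_lossComp (hproper : Proper ℓ) {p : Fin d → ℝ} (hp : p ∈ projInterior d) :
    IsLocalMin (fun q => ∑ i, piInv d p i * lossComp d ℓ q i) p := by
  filter_upwards [(isOpen_projInterior d).mem_nhds hp] with q hq
  exact hproper _ (piInv_mem_simplex hp) _ (piInv_mem_simplex hq)

lemma sum_piInv_mul_fderiv_lossComp (hproper : Proper ℓ) {p : Fin d → ℝ}
    (hp : p ∈ projInterior d) (hℓ : DifferentiableAt ℝ (lossComp d ℓ) p) (v : Fin d → ℝ) :
    ∑ i, piInv d p i * fderiv ℝ (lossComp d ℓ) p v i = 0 := by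
  have hrisk : HasFDerivAt (fun q => ∑ i, piInv d p i * lossComp d ℓ q i)
      (∑ i, piInv d p i • (proj i).comp (fderiv ℝ (lossComp d ℓ) p)) p :=
    HasFDerivAt.fun_sum fun i _ => (hasFDerivAt_pi'.1 hℓ.hasFDerivAt i).const_mul _
  simpa using congrArg (· v) ((hproper.isLocalMin_lossComp hp).hasFDerivAt_eq_zero hrisk)

lemma gradPB_eq (hproper : Proper ℓ) {x : Fin d → ℝ} (hx : x ∈ projInterior d)
    (hℓ : DifferentiableAt ℝ (lossComp d ℓ) x) :
    gradPB d ℓ x = fun j => lossComp d ℓ x j.castSucc - lossComp d ℓ x (Fin.last d) := by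
  funext j
  set F := fderiv ℝ (lossComp d ℓ) x
  have hbayes : HasFDerivAt (projBayes d ℓ)
      (∑ i, (piInv d x i • (proj i).comp F + lossComp d ℓ x i • piInvDer d i)) x :=
    HasFDerivAt.fun_sum (u := Finset.univ) fun i _ =>
      (hasFDerivAt_piInv_apply d i x).fun_mul (hasFDerivAt_pi'.1 hℓ.hasFDerivAt i)
  have hsplit : gradPB d ℓ x j = ∑ i, piInv d x i * F (Pi.single j 1) i
      + ∑ i, lossComp d ℓ x i * piInvDer d i (Pi.single j 1) := by
    simp [gradPB, hbayes.fderiv, Finset.sum_add_distrib]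
  rw [hsplit, hproper.sum_piInv_mul_fderiv_lossComp hx hℓ, zero_add, Fin.sum_univ_castSucc]
  simp [Pi.single_apply, sub_eq_add_neg]

lemma hessPB_eq (hproper : Proper ℓ)
    (hℓ : ∀ x ∈ projInterior d, DifferentiableAt ℝ (lossComp d ℓ) x)
    {p : Fin d → ℝ} (hp : p ∈ projInterior d) (i j : Fin d) :
    hessPB d ℓ p i j = fderiv ℝ (lossComp d ℓ) p (Pi.single j 1) i.castSucc
      - fderiv ℝ (lossComp d ℓ) p (Pi.single j 1) (Fin.last d) := by
  set F := fderiv ℝ (lossComp d ℓ) p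
  have hgrad : gradPB d ℓ =ᶠ[nhds p]
      fun x (k : Fin d) => lossComp d ℓ x k.castSucc - lossComp d ℓ x (Fin.last d) := by
    filter_upwards [(isOpen_projInterior d).mem_nhds hp] with x hx
    exact hproper.gradPB_eq hx (hℓ x hx)
  have hdiff : HasFDerivAt
      (fun x (k : Fin d) => lossComp d ℓ x k.castSucc - lossComp d ℓ x (Fin.last d))
      (pi fun k => (proj k.castSucc).comp F - (proj (Fin.last d)).comp F) p := by
    have hF := hasFDerivAt_pi'.1 (hℓ p hp).hasFDerivAt
    exact hasFDerivAt_pi.2 fun k => (hF k.castSucc).sub (hF (Fin.last d))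
  simp [hessPB, hgrad.fderiv_eq, hdiff.fderiv, F]

lemma fderiv_lossComp_last (hproper : Proper ℓ)
    (hℓ : ∀ x ∈ projInterior d, DifferentiableAt ℝ (lossComp d ℓ) x)
    {p : Fin d → ℝ} (hp : p ∈ projInterior d) (j : Fin d) :
    fderiv ℝ (lossComp d ℓ) p (Pi.single j 1) (Fin.last d)
      = -∑ k, p k * hessPB d ℓ p k j := by
  have hstat := hproper.sum_piInv_mul_fderiv_lossComp hp (hℓ p hp) (Pi.single j 1)
  rw [Fin.sum_univ_castSucc] at hstat
  simp only [piInv_castSucc, piInv_last] at hstat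
  simp only [hproper.hessPB_eq hℓ hp, mul_sub, Finset.sum_sub_distrib, ← Finset.sum_mul]
  linarith

lemma fderiv_lossComp_castSucc (hproper : Proper ℓ)
    (hℓ : ∀ x ∈ projInterior d, DifferentiableAt ℝ (lossComp d ℓ) x)
    {p : Fin d → ℝ} (hp : p ∈ projInterior d) (i j : Fin d) :
    fderiv ℝ (lossComp d ℓ) p (Pi.single j 1) i.castSucc
      = hessPB d ℓ p i j - ∑ k, p k * hessPB d ℓ p k j := by
  rw [hproper.hessPB_eq hℓ hp i j, hproper.fderiv_lossComp_last hℓ hp j]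
  ring

end Proper

end

theorem stmt_8_general (d : ℕ)
    (ℓ : (Fin (d + 1) → ℝ) → (Fin (d + 1) → ℝ)) (hproper : Proper ℓ)
    (hdiff : ∀ pt ∈ projInterior d, ContDiffAt ℝ 1 (lossComp d ℓ) pt) :
    ∀ pt ∈ projInterior d,
      (∀ i j : Fin d,
        fderiv ℝ (lossComp d ℓ) pt (Pi.single j 1) i.castSucc
          = hessPB d ℓ pt i j - ∑ k : Fin d, pt k * hessPB d ℓ pt k j) ∧
      (∀ j : Fin d,
        fderiv ℝ (lossComp d ℓ) pt (Pi.single j 1) (Fin.last d)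
          = -(∑ i : Fin d,
                pt i * (hessPB d ℓ pt i j - ∑ k : Fin d, pt k * hessPB d ℓ pt k j))
              / (1 - ∑ k, pt k)) := by
  intro pt hpt
  have hℓ : ∀ x ∈ projInterior d, DifferentiableAt ℝ (lossComp d ℓ) x :=
    fun x hx => (hdiff x hx).differentiableAt one_ne_zero
  refine ⟨hproper.fderiv_lossComp_castSucc hℓ hpt, fun j => ?_⟩
  have hlast : (1 : ℝ) - ∑ k, pt k ≠ 0 := by linarith [hpt.2]
  have hweighted : ∑ i, pt i * (hessPB d ℓ pt i j - ∑ k, pt k * hessPB d ℓ pt k j)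
      = (1 - ∑ k, pt k) * ∑ k, pt k * hessPB d ℓ pt k j := by
    simp only [mul_sub, Finset.sum_sub_distrib, ← Finset.sum_mul]
    ring
  rw [hproper.fderiv_lossComp_last hℓ hpt, hweighted, neg_div, mul_div_cancel_left₀ _ hlast]

/-- For a proper loss with `ℓ ∘ Π⁻¹` continuously differentiable on the interior of the
projected simplex, the Jacobian of `ℓ ∘ Π⁻¹` is given blockwise by
upper block `(I - 1 ptᵀ) H_{L̲̃}(pt)` and last row `-(ptᵀ/p_C)(I - 1 ptᵀ) H_{L̲̃}(pt)`. -/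
theorem stmt_8 (d : ℕ) (hd : 1 ≤ d)
    (ℓ : (Fin (d + 1) → ℝ) → (Fin (d + 1) → ℝ)) (hproper : Proper ℓ)
    (hdiff : ∀ pt ∈ projInterior d, ContDiffAt ℝ 1 (lossComp d ℓ) pt) :
    ∀ pt ∈ projInterior d,
      (∀ i j : Fin d,
        fderiv ℝ (lossComp d ℓ) pt (Pi.single j 1) i.castSucc
          = hessPB d ℓ pt i j - ∑ k : Fin d, pt k * hessPB d ℓ pt k j) ∧
      (∀ j : Fin d,
        fderiv ℝ (lossComp d ℓ) pt (Pi.single j 1) (Fin.last d)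
          = -(∑ i : Fin d,
                pt i * (hessPB d ℓ pt i j - ∑ k : Fin d, pt k * hessPB d ℓ pt k j))
              / (1 - ∑ k, pt k)) :=
  stmt_8_general d ℓ hproper hdiff
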